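/- arXiv:1901.09752 — 2 statements merged into one kernel-verified Lean document; each statement's English description precedes it below -/
import Mathlib

section
/- There exists a C² function u : ℝ² → ℝ that satisfies the 'wrong minimal surface equation' (1 + u_x²)·u_xx + 2·u_x·u_y·u_xy + (1 + u_y²)·u_yy = 0 at every point of ℝ² and is not affine linear. Hence the wrong minimal surface equation does not have the Bernstein property, answering a question of L. Simon. -/
/-- First partial derivative in the `x`-direction. -/
noncomputable def ux (u : ℝ × ℝ → ℝ) (p : ℝ × ℝ) : ℝ := fderiv ℝ u p (1, 0)

/-- First partial derivative in the `y`-direction. -/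
noncomputable def uy (u : ℝ × ℝ → ℝ) (p : ℝ × ℝ) : ℝ := fderiv ℝ u p (0, 1)

/-- Second partial derivative `u_xx`. -/
noncomputable def uxx (u : ℝ × ℝ → ℝ) (p : ℝ × ℝ) : ℝ := fderiv ℝ (ux u) p (1, 0)

/-- Second partial derivative `u_xy`. -/
noncomputable def uxy (u : ℝ × ℝ → ℝ) (p : ℝ × ℝ) : ℝ := fderiv ℝ (ux u) p (0, 1)

/-- Second partial derivative `u_yy`. -/
noncomputable def uyy (u : ℝ × ℝ → ℝ) (p : ℝ × ℝ) : ℝ := fderiv ℝ (uy u) p (0, 1)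

/-! Separating variables, `u(x, y) = g(x) + h(y)`, kills the mixed term and splits the
equation into `(1 + g'²) g'' = -(1 + h'²) h''`; both sides are then constant, and `h = -g`
with `(1 + g'²) g'' = 1` works. With `φ(t) = t + t³ / 3` this ODE reads `(φ ∘ g')' = 1`,
solved by `g' = φ⁻¹`, which is smooth since `φ' = 1 + t² > 0`. As `g'` is injective, `u` is
not affine. -/

def sepSum (g h : ℝ → ℝ) (p : ℝ × ℝ) : ℝ := g p.1 + h p.2

noncomputable def wrongMinimalSurfaceOperator (u : ℝ × ℝ → ℝ) (p : ℝ × ℝ) : ℝ :=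
  (1 + ux u p ^ 2) * uxx u p + 2 * ux u p * uy u p * uxy u p + (1 + uy u p ^ 2) * uyy u p

section SepSum

variable {g h : ℝ → ℝ}

open ContinuousLinearMap in
theorem hasFDerivAt_sepSum {g' h' : ℝ} {p : ℝ × ℝ} (hg : HasDerivAt g g' p.1)
    (hh : HasDerivAt h h' p.2) :
    HasFDerivAt (sepSum g h) (g' • fst ℝ ℝ ℝ + h' • snd ℝ ℝ ℝ) p :=
  (hg.comp_hasFDerivAt p hasFDerivAt_fst).add (hh.comp_hasFDerivAt p hasFDerivAt_snd)

theorem contDiff_sepSum {n : WithTop ℕ∞} (hg : ContDiff ℝ n g) (hh : ContDiff ℝ n h) :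
    ContDiff ℝ n (sepSum g h) :=
  (hg.comp contDiff_fst).add (hh.comp contDiff_snd)

theorem ux_sepSum (hg : Differentiable ℝ g) (hh : Differentiable ℝ h) :
    ux (sepSum g h) = sepSum (deriv g) 0 := by
  funext p
  simp [ux, sepSum, (hasFDerivAt_sepSum (hg p.1).hasDerivAt (hh p.2).hasDerivAt).fderiv]

theorem uy_sepSum (hg : Differentiable ℝ g) (hh : Differentiable ℝ h) :
    uy (sepSum g h) = sepSum 0 (deriv h) := by
  funext p
  simp [uy, sepSum, (hasFDerivAt_sepSum (hg p.1).hasDerivAt (hh p.2).hasDerivAt).fderiv]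

theorem wrongMinimalSurfaceOperator_sepSum (hg : Differentiable ℝ g)
    (hg' : Differentiable ℝ (deriv g)) (hh : Differentiable ℝ h)
    (hh' : Differentiable ℝ (deriv h)) (p : ℝ × ℝ) :
    wrongMinimalSurfaceOperator (sepSum g h) p =
      (1 + deriv g p.1 ^ 2) * deriv (deriv g) p.1 +
        (1 + deriv h p.2 ^ 2) * deriv (deriv h) p.2 := by
  have h0 : Differentiable ℝ (0 : ℝ → ℝ) := differentiable_const 0
  have hxx : uxx (sepSum g h) = sepSum (deriv (deriv g)) 0 := by
    change ux (ux _) = _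
    rw [ux_sepSum hg hh, ux_sepSum hg' h0]
  have hxy : uxy (sepSum g h) = sepSum 0 0 := by
    change uy (ux _) = _
    rw [ux_sepSum hg hh, uy_sepSum hg' h0, deriv_zero]
  have hyy : uyy (sepSum g h) = sepSum 0 (deriv (deriv h)) := by
    change uy (uy _) = _
    rw [uy_sepSum hg hh, uy_sepSum h0 hh']
  simp [wrongMinimalSurfaceOperator, hxx, hxy, hyy, ux_sepSum hg hh, uy_sepSum hg hh, sepSum]

theorem wrongMinimalSurfaceOperator_sepSum_neg {c : ℝ} (hg : Differentiable ℝ g)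
    (hg' : Differentiable ℝ (deriv g))
    (hc : ∀ x, (1 + deriv g x ^ 2) * deriv (deriv g) x = c) (p : ℝ × ℝ) :
    wrongMinimalSurfaceOperator (sepSum g (-g)) p = 0 := by
  have hneg : deriv (-g) = -deriv g := deriv.neg'
  have hneg' : deriv (-deriv g) = -deriv (deriv g) := deriv.neg'
  rw [wrongMinimalSurfaceOperator_sepSum hg hg' hg.neg (hneg ▸ hg'.neg), hneg, hneg']
  simp only [Pi.neg_apply, neg_sq, mul_neg, hc, add_neg_cancel]

theorem deriv_eq_of_sepSum_eq_affine {a b c : ℝ}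
    (hu : ∀ x y, sepSum g h (x, y) = a * x + b * y + c) (x : ℝ) : deriv g x = a := by
  have hg : g = fun x => a * x + (c - h 0) := funext fun x => by
    have := hu x 0
    simp only [sepSum] at this
    linarith
  rw [hg]
  simp

end SepSum

namespace WrongMinimalSurface

noncomputable def phi (t : ℝ) : ℝ := t + t ^ 3 / 3

theorem hasDerivAt_phi (t : ℝ) : HasDerivAt phi (1 + t ^ 2) t :=
  ((hasDerivAt_id' t).add ((hasDerivAt_pow 3 t).div_const 3)).congr_deriv (by ring)

theorem contDiff_phi {n : WithTop ℕ∞} : ContDiff ℝ n phi := by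
  unfold phi
  fun_prop

theorem strictMono_phi : StrictMono phi :=
  strictMono_id.add_monotone
    ((Odd.strictMono_pow (by decide : Odd 3)).monotone.div_const (by norm_num))

theorem surjective_phi : Function.Surjective phi := by
  refine (contDiff_phi (n := 0)).continuous.surjective ?_ ?_
  · refine Filter.tendsto_atTop_mono' _ ?_ Filter.tendsto_id
    filter_upwards [Filter.eventually_ge_atTop 0] with t ht
    have := pow_nonneg ht 3
    simp only [id, phi]
    linarith
  · refine Filter.tendsto_atBot_mono' _ ?_ Filter.tendsto_id
    filter_upwards [Filter.eventually_le_atBot 0] with t ht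
    have := Odd.pow_nonpos (by decide : Odd 3) ht
    simp only [id, phi]
    linarith

noncomputable def phiHomeomorph : ℝ ≃ₜ ℝ :=
  (strictMono_phi.orderIsoOfSurjective phi surjective_phi).toHomeomorph

noncomputable def psi : ℝ → ℝ := phiHomeomorph.symm

theorem phi_psi (x : ℝ) : phi (psi x) = x := phiHomeomorph.apply_symm_apply x

theorem psi_injective : Function.Injective psi := phiHomeomorph.symm.injective

theorem contDiff_psi {n : WithTop ℕ∞} : ContDiff ℝ n psi :=
  phiHomeomorph.contDiff_symm_deriv (fun t => by positivity) hasDerivAt_phi contDiff_phi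

theorem hasDerivAt_psi (x : ℝ) : HasDerivAt psi (1 + psi x ^ 2)⁻¹ x :=
  HasDerivAt.of_local_left_inverse phiHomeomorph.symm.continuous.continuousAt
    (hasDerivAt_phi (psi x)) (by positivity) (.of_forall phi_psi)

/-- The Legendre transform of `t ↦ t² / 2 + t⁴ / 12`, whose derivative is `phi`. -/
noncomputable def profile (x : ℝ) : ℝ := x * psi x - (psi x ^ 2 / 2 + psi x ^ 4 / 12)

theorem hasDerivAt_profile (x : ℝ) : HasDerivAt profile (psi x) x := by
  have hψ := hasDerivAt_psi x
  have hx : x = psi x + psi x ^ 3 / 3 := (phi_psi x).symm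
  exact ((hasDerivAt_id' x).mul hψ).sub (((hψ.pow 2).div_const 2).add ((hψ.pow 4).div_const 12))
    |>.congr_deriv (by linear_combination (1 + psi x ^ 2)⁻¹ * hx)

theorem deriv_profile : deriv profile = psi := funext fun x => (hasDerivAt_profile x).deriv

theorem contDiff_profile {n : WithTop ℕ∞} : ContDiff ℝ n profile := by
  have := contDiff_psi (n := n)
  unfold profile
  fun_prop

theorem one_add_sq_deriv_profile_mul (x : ℝ) :
    (1 + deriv profile x ^ 2) * deriv (deriv profile) x = 1 := by
  rw [deriv_profile, (hasDerivAt_psi x).deriv]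
  field_simp

end WrongMinimalSurface

open WrongMinimalSurface in
/-- The "wrong minimal surface equation"
`(1 + u_x²)u_xx + 2u_xu_yu_xy + (1 + u_y²)u_yy = 0` admits an entire non-linear
`C²` solution, hence it does not have the Bernstein property (answering a question
of L. Simon). -/
theorem wrong_minimal_surface_equation_not_bernstein :
    ∃ u : ℝ × ℝ → ℝ, ContDiff ℝ 2 u ∧
      (∀ p : ℝ × ℝ,
        (1 + ux u p ^ 2) * uxx u p + 2 * ux u p * uy u p * uxy u p
          + (1 + uy u p ^ 2) * uyy u p = 0) ∧
      ¬ ∃ a b c : ℝ, ∀ x y : ℝ, u (x, y) = a * x + b * y + c := by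
  have hdiff : Differentiable ℝ profile := (contDiff_profile (n := 1)).differentiable one_ne_zero
  have hdiff' : Differentiable ℝ (deriv profile) :=
    deriv_profile ▸ (contDiff_psi (n := 1)).differentiable one_ne_zero
  refine ⟨sepSum profile (-profile), contDiff_sepSum contDiff_profile contDiff_profile.neg,
    wrongMinimalSurfaceOperator_sepSum_neg hdiff hdiff' one_add_sq_deriv_profile_mul, ?_⟩
  rintro ⟨a, b, c, hu⟩
  have hconst (x : ℝ) : psi x = a := deriv_profile ▸ deriv_eq_of_sepSum_eq_affine hu x
  exact zero_ne_one (psi_injective ((hconst 0).trans (hconst 1).symm))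
end

section
/- The function u : ℝ² → ℝ, u(x,y) := x² + y², is of class C², is not affine linear, and satisfies L_{0,0}[u] = 0 at every point of ℝ², i.e. (u_x² − u_y²)·u_xx + 4·u_x·u_y·u_xy + (u_y² − u_x²)·u_yy = 0. Hence the equation L_{0,0}[u] = 0 does not have the Bernstein property. -/
/-!
For `u(x, y) = f(x) + g(y)` the mixed derivative vanishes and
`L_{0,0}[u] = (f'² − g'²)(f'' − g'')`, so `L_{0,0}[u] = 0` as soon as `f'' = g''`.
Taking `f = g = (·)²` gives the paraboloid `x² + y²`, which is not affine since it
restricts to `x²` on the `x`-axis.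
-/

open ContinuousLinearMap

section Separable

variable {f g f' g' f'' g'' : ℝ → ℝ}

theorem hasFDerivAt_comp_fst (hf : ∀ x, HasDerivAt f (f' x) x) (p : ℝ × ℝ) :
    HasFDerivAt (fun q : ℝ × ℝ => f q.1) (f' p.1 • fst ℝ ℝ ℝ) p :=
  (hf p.1).comp_hasFDerivAt p hasFDerivAt_fst

theorem hasFDerivAt_comp_snd (hg : ∀ y, HasDerivAt g (g' y) y) (p : ℝ × ℝ) :
    HasFDerivAt (fun q : ℝ × ℝ => g q.2) (g' p.2 • snd ℝ ℝ ℝ) p :=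
  (hg p.2).comp_hasFDerivAt p hasFDerivAt_snd

theorem hasFDerivAt_separable (hf : ∀ x, HasDerivAt f (f' x) x)
    (hg : ∀ y, HasDerivAt g (g' y) y) (p : ℝ × ℝ) :
    HasFDerivAt (fun q : ℝ × ℝ => f q.1 + g q.2) (f' p.1 • fst ℝ ℝ ℝ + g' p.2 • snd ℝ ℝ ℝ) p :=
  (hasFDerivAt_comp_fst hf p).add (hasFDerivAt_comp_snd hg p)

theorem ux_separable (hf : ∀ x, HasDerivAt f (f' x) x) (hg : ∀ y, HasDerivAt g (g' y) y) :
    ux (fun q => f q.1 + g q.2) = fun q => f' q.1 := by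
  ext p
  simp [ux, (hasFDerivAt_separable hf hg p).fderiv]

theorem uy_separable (hf : ∀ x, HasDerivAt f (f' x) x) (hg : ∀ y, HasDerivAt g (g' y) y) :
    uy (fun q => f q.1 + g q.2) = fun q => g' q.2 := by
  ext p
  simp [uy, (hasFDerivAt_separable hf hg p).fderiv]

theorem uxx_separable (hf : ∀ x, HasDerivAt f (f' x) x) (hg : ∀ y, HasDerivAt g (g' y) y)
    (hf' : ∀ x, HasDerivAt f' (f'' x) x) (p : ℝ × ℝ) :
    uxx (fun q => f q.1 + g q.2) p = f'' p.1 := by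
  simp [uxx, ux_separable hf hg, (hasFDerivAt_comp_fst hf' p).fderiv]

theorem uxy_separable (hf : ∀ x, HasDerivAt f (f' x) x) (hg : ∀ y, HasDerivAt g (g' y) y)
    (hf' : ∀ x, HasDerivAt f' (f'' x) x) (p : ℝ × ℝ) :
    uxy (fun q => f q.1 + g q.2) p = 0 := by
  simp [uxy, ux_separable hf hg, (hasFDerivAt_comp_fst hf' p).fderiv]

theorem uyy_separable (hf : ∀ x, HasDerivAt f (f' x) x) (hg : ∀ y, HasDerivAt g (g' y) y)
    (hg' : ∀ y, HasDerivAt g' (g'' y) y) (p : ℝ × ℝ) :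
    uyy (fun q => f q.1 + g q.2) p = g'' p.2 := by
  simp [uyy, uy_separable hf hg, (hasFDerivAt_comp_snd hg' p).fderiv]

theorem L_zero_zero_separable (hf : ∀ x, HasDerivAt f (f' x) x)
    (hg : ∀ y, HasDerivAt g (g' y) y) (hf' : ∀ x, HasDerivAt f' (f'' x) x)
    (hg' : ∀ y, HasDerivAt g' (g'' y) y) (p : ℝ × ℝ) :
    let u := fun q : ℝ × ℝ => f q.1 + g q.2
    (ux u p ^ 2 - uy u p ^ 2) * uxx u p + 4 * ux u p * uy u p * uxy u p
        + (uy u p ^ 2 - ux u p ^ 2) * uyy u p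
      = (f' p.1 ^ 2 - g' p.2 ^ 2) * (f'' p.1 - g'' p.2) := by
  simp only [ux_separable hf hg, uy_separable hf hg, uxx_separable hf hg hf',
    uxy_separable hf hg hf', uyy_separable hf hg hg']
  ring

end Separable

theorem hasDerivAt_sq_two_mul (x : ℝ) : HasDerivAt (fun x : ℝ => x ^ 2) (2 * x) x := by
  simpa using hasDerivAt_pow 2 x

/-- The function `u(x,y) = x² + y²` is a `C²` entire non-linear solution of
`L_{0,0}[u] = 0`, i.e. of `(u_x² − u_y²)u_xx + 4u_xu_yu_xy + (u_y² − u_x²)u_yy = 0`;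
hence this equation does not have the Bernstein property. -/
theorem L_zero_zero_not_bernstein
    (u : ℝ × ℝ → ℝ) (hu : u = fun p => p.1 ^ 2 + p.2 ^ 2) :
    ContDiff ℝ 2 u ∧
    (¬ ∃ a b c : ℝ, ∀ x y : ℝ, u (x, y) = a * x + b * y + c) ∧
    ∀ p : ℝ × ℝ,
      (ux u p ^ 2 - uy u p ^ 2) * uxx u p + 4 * ux u p * uy u p * uxy u p
        + (uy u p ^ 2 - ux u p ^ 2) * uyy u p = 0 := by
  subst hu
  refine ⟨by fun_prop, ?_, fun p => ?_⟩
  · rintro ⟨a, b, c, h⟩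
    have h₀ := h 0 0
    have h₁ := h 1 0
    have h₂ := h (-1) 0
    norm_num at h₀ h₁ h₂
    linarith
  · rw [L_zero_zero_separable hasDerivAt_sq_two_mul hasDerivAt_sq_two_mul
      (fun _ => hasDerivAt_const_mul 2) (fun _ => hasDerivAt_const_mul 2) p, sub_self, mul_zero]
end
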